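/- Let d ≥ 2 and let P be a probability measure on Ω = {0,1}^{Z^d} satisfying A1–A4. Then for every e ∈ Z^d with |e|₁ = 1 and every p ≥ 1, the chemical distance from the origin to the first point of S_∞ on the ray in direction e has finite p-th moment under P₀; that is, with n_e(ω) = min{k > 0 : k·e ∈ S_∞}, one has E₀[ρ_S(0, n_e·e)^p] < ∞. -/

import Mathlib

open MeasureTheory Filter
open scoped ENNReal

namespace Perco

/-- A point of the lattice `ℤ^d`. -/
abbrev Pt (d : ℕ) := Fin d → ℤ

/-- A percolation configuration on `ℤ^d`. -/
abbrev Config (d : ℕ) := Pt d → Bool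

variable {d : ℕ}

/-- The `ℓ¹`-distance on `ℤ^d`. -/
def dist1 (x y : Pt d) : ℕ := ∑ i, (x i - y i).natAbs

/-- The `ℓ^∞`-distance on `ℤ^d`. -/
def distInf (x y : Pt d) : ℕ := Finset.univ.sup fun i => (x i - y i).natAbs

/-- The closed `ℓ^∞`-ball of radius `R` around `x`. -/
def ballZ (x : Pt d) (R : ℕ) : Set (Pt d) := {y | distInf x y ≤ R}

/-- Nearest-neighbour adjacency in `ℤ^d`. -/
def adj (x y : Pt d) : Prop := dist1 x y = 1

/-- The occupied set of a configuration. -/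
def SS (ω : Config d) : Set (Pt d) := {x | ω x = true}

/-- One step of a nearest-neighbour path staying inside `T`. -/
def stepRel (T : Set (Pt d)) (x y : Pt d) : Prop := adj x y ∧ x ∈ T ∧ y ∈ T

/-- `x` and `y` are connected by a nearest-neighbour path inside `T`. -/
def connIn (T : Set (Pt d)) (x y : Pt d) : Prop :=
  x ∈ T ∧ y ∈ T ∧ Relation.ReflTransGen (stepRel T) x y

/-- The connected component (cluster) of `x` in `T`. -/
def cluster (T : Set (Pt d)) (x : Pt d) : Set (Pt d) := {y | connIn T x y}

/-- `S_r`: vertices of `S(ω)` in connected components of `ℓ¹`-diameter at least `r`. -/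
def Sr (ω : Config d) (r : ℝ) : Set (Pt d) :=
  {x | x ∈ SS ω ∧ ∃ y ∈ cluster (SS ω) x, ∃ z ∈ cluster (SS ω) x, r ≤ (dist1 y z : ℝ)}

/-- `S_∞`: vertices of `S(ω)` in infinite connected components. -/
def Sinf (ω : Config d) : Set (Pt d) := {x | x ∈ SS ω ∧ (cluster (SS ω) x).Infinite}

/-- The shift of a configuration by `x`. -/
def shift (x : Pt d) (ω : Config d) : Config d := fun y => ω (x + y)

/-- An increasing event. -/
def IncreasingEvent (G : Set (Config d)) : Prop :=
  ∀ ω ω' : Config d, (∀ x, ω x = true → ω' x = true) → ω ∈ G → ω' ∈ G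

/-- A decreasing event. -/
def DecreasingEvent (G : Set (Config d)) : Prop :=
  ∀ ω ω' : Config d, (∀ x, ω' x = true → ω x = true) → ω ∈ G → ω' ∈ G

/-- The event `G` depends only on the coordinates in `B`. -/
def DependsOn (G : Set (Config d)) (B : Set (Pt d)) : Prop :=
  ∀ ω ω' : Config d, (∀ x ∈ B, ω x = ω' x) → (ω ∈ G ↔ ω' ∈ G)

/-- The edge boundary of `A` in `Sset`: (directed representatives of) edges of `ℤ^d`
with one endpoint in `A` and the other in `Sset \ A`. -/
def edgeBd (Sset A : Set (Pt d)) : Set (Pt d × Pt d) :=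
  {p | adj p.1 p.2 ∧ p.1 ∈ A ∧ p.2 ∈ Sset \ A}

/-- The density `η(u) = P[0 ∈ S_∞]` of the infinite cluster. -/
noncomputable def eta (d : ℕ) (P : Measure (Config d)) : ℝ :=
  (P {ω | (0 : Pt d) ∈ Sinf ω}).toReal

/-- The first local-uniqueness event of axiom S1. -/
def locUniq1 (d : ℕ) (R : ℕ) : Set (Config d) :=
  {ω | (Sr ω R ∩ ballZ (0 : Pt d) R).Nonempty}

/-- The second local-uniqueness event of axiom S1. -/
def locUniq2 (d : ℕ) (R : ℕ) : Set (Config d) :=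
  {ω | ∀ x ∈ Sr ω ((R : ℝ)/10) ∩ ballZ (0 : Pt d) R,
       ∀ y ∈ Sr ω ((R : ℝ)/10) ∩ ballZ (0 : Pt d) R,
       connIn (SS ω ∩ ballZ (0 : Pt d) (2*R)) x y}


/-- The chemical (graph) distance inside `T`, with value `⊤` if there is no path. -/
noncomputable def chemDist (T : Set (Pt d)) (x y : Pt d) : ℕ∞ :=
  sInf {n : ℕ∞ | ∃ m : ℕ, n = (m : ℕ∞) ∧ ∃ p : ℕ → Pt d, p 0 = x ∧ p m = y ∧
    (∀ k, k ≤ m → p k ∈ T) ∧ ∀ k, k < m → adj (p k) (p (k+1))}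

/-- The chemical ball `B_S(x,R)` in the configuration `ω`. -/
noncomputable def chemBall (ω : Config d) (x : Pt d) (R : ℕ) : Set (Pt d) :=
  {y | chemDist (SS ω) x y ≤ (R : ℕ∞)}

/-- `n_e(ω)`: the first positive `k` with `k·e ∈ S_∞`. -/
noncomputable def firstOnRay (ω : Config d) (e : Pt d) : ℕ :=
  sInf {k : ℕ | 0 < k ∧ ((k : ℤ) • e) ∈ Sinf ω}

end Perco

/-!
On the event that `S_∞` meets `{k e : 1 ≤ k ≤ R + 1}` and that any two points of
`S_∞ ∩ B(0, R + 1)` are at chemical distance at most `C (R + 1)`, we get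
`ρ_S(0, n_e e) ≤ C (R + 1)` as soon as `0 ∈ S_∞`. The first event is the event of A3 shifted by `e`, which
has the same probability by A1; the shift is what makes the hitting time positive. Hence
`P₀[ρ_S(0, n_e e) ≥ n] ≤ C exp(-c (log n)^(1 + Δ))` for large `n`, which decays faster than any
power of `n`, so every moment is finite.
-/

open Asymptotics

lemma ENat.eq_of_forall_le_natCast_iff {a b : ℕ∞} (h : ∀ n : ℕ, a ≤ n ↔ b ≤ n) : a = b := by
  have key : ∀ {a b : ℕ∞}, (∀ n : ℕ, a ≤ n ↔ b ≤ n) → a ≤ b := fun {a b} h => by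
    induction b using ENat.recTopCoe with
    | top => exact le_top
    | coe m => exact (h m).2 le_rfl
  exact le_antisymm (key h) (key fun n => (h n).symm)

lemma ENat.measurable_of_measurable_le_natCast {α : Type*} [MeasurableSpace α] {f : α → ℕ∞}
    (hf : ∀ n : ℕ, Measurable fun a => f a ≤ n) : Measurable f := by
  refine measurable_to_countable' fun k => ?_
  have : f ⁻¹' {k} = {a | ∀ n : ℕ, f a ≤ n ↔ k ≤ n} := by
    ext a
    exact ⟨fun h n => by rw [Set.mem_singleton_iff.1 h], ENat.eq_of_forall_le_natCast_iff⟩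
  rw [this]
  exact (Measurable.forall fun n => (hf n).iff measurable_const).setOf

lemma measurable_sInf_setOf {α : Type*} [MeasurableSpace α] {p : ℕ → α → Prop}
    (hp : ∀ k, Measurable (p k)) : Measurable fun a => sInf {k | p k a} := by
  have h : ∀ a n, sInf {k | p k a} ≤ n ↔ (∀ k, ¬ p k a) ∨ ∃ k, k ≤ n ∧ p k a := by
    intro a n
    rcases Set.eq_empty_or_nonempty {k | p k a} with hS | hS
    · simp only [hS, Nat.sInf_empty, zero_le, true_iff]
      exact Or.inl fun k hk => (hS.subset hk : k ∈ (∅ : Set ℕ))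
    · obtain ⟨j, hj⟩ := hS
      constructor
      · exact fun hle => Or.inr ⟨_, hle, Nat.sInf_mem ⟨j, hj⟩⟩
      · rintro (hnone | ⟨k, hkn, hk⟩)
        · exact absurd hj (hnone j)
        · exact (Nat.sInf_le hk).trans hkn
  refine measurable_of_Iic fun n => ?_
  simp only [Set.preimage, Set.mem_Iic, h]
  exact ((Measurable.forall fun k => (hp k).not).or
    (Measurable.exists fun k => measurable_const.and (hp k))).setOf

lemma isBigO_exp_neg_log_rpow {c Δ q κ : ℝ} (hc : 0 < c) (hΔ : 0 < Δ) (hq : 0 ≤ q) (hκ : 0 < κ)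
    {u : ℕ → ℝ} (hu : ∀ᶠ n in atTop, κ * n ≤ u n) :
    (fun n => Real.exp (-c * Real.log (u n) ^ (1 + Δ))) =O[atTop] fun n => (n : ℝ) ^ (-q) := by
  -- `c (log R)^Δ ≥ q` eventually, which turns `exp (-c (log R)^(1+Δ))` into at most `R^(-q)`.
  have hpoly : ∀ᶠ R : ℝ in atTop, Real.exp (-c * Real.log R ^ (1 + Δ)) ≤ R ^ (-q) := by
    have hlog := (tendsto_rpow_atTop hΔ).comp Real.tendsto_log_atTop
    filter_upwards [hlog.eventually_ge_atTop (q / c), Real.tendsto_log_atTop.eventually_ge_atTop 0,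
      eventually_gt_atTop 0] with R hR hlog0 hR0
    rw [Real.rpow_def_of_pos hR0, Real.exp_le_exp, Real.rpow_one_add' hlog0 (by linarith)]
    have : q ≤ c * Real.log R ^ Δ := by rwa [Function.comp_apply, div_le_iff₀' hc] at hR
    nlinarith
  have hu_top : Tendsto u atTop atTop :=
    tendsto_atTop_mono' atTop hu (tendsto_natCast_atTop_atTop.const_mul_atTop hκ)
  refine IsBigO.of_bound (κ ^ (-q)) ?_
  filter_upwards [hu, hu_top.eventually hpoly, eventually_gt_atTop 0] with n hun hpn hn
  have hn' : (0 : ℝ) < n := Nat.cast_pos.2 hn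
  rw [Real.norm_of_nonneg (Real.exp_pos _).le, Real.norm_of_nonneg (Real.rpow_nonneg hn'.le _),
    ← Real.mul_rpow hκ.le hn'.le]
  exact hpn.trans (Real.rpow_le_rpow_of_nonpos (by positivity) hun (by linarith))

lemma integrable_rpow_of_isBigO_tail {Ω : Type*} [MeasurableSpace Ω] {μ : Measure Ω}
    [IsFiniteMeasure μ] {X : Ω → ℕ} (hX : Measurable X) {p q : ℝ} (hpq : p + 1 < q)
    (htail : (fun n : ℕ => μ.real {ω | n ≤ X ω}) =O[atTop] fun n => (n : ℝ) ^ (-q)) :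
    Integrable (fun ω => (X ω : ℝ) ^ p) μ := by
  have hsum : Summable fun n : ℕ => (n : ℝ) ^ p * μ.real {ω | n ≤ X ω} := by
    refine summable_of_isBigO_nat (Real.summable_nat_rpow.2 (by linarith : p - q < -1)) ?_
    refine ((isBigO_refl (fun n : ℕ => (n : ℝ) ^ p) atTop).mul htail).trans_eventuallyEq ?_
    filter_upwards [eventually_gt_atTop 0] with n hn
    rw [← Real.rpow_add (Nat.cast_pos.2 hn), sub_eq_add_neg]
  refine ⟨((measurable_from_top (f := fun n : ℕ => (n : ℝ) ^ p)).comp hX).aestronglyMeasurable, ?_⟩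
  calc ∫⁻ ω, ‖(X ω : ℝ) ^ p‖ₑ ∂μ = ∫⁻ ω, ENNReal.ofReal ((X ω : ℝ) ^ p) ∂μ := by
        simp only [Real.enorm_eq_ofReal (Real.rpow_nonneg (Nat.cast_nonneg _) _)]
    _ = ∫⁻ n, ENNReal.ofReal ((n : ℝ) ^ p) ∂μ.map X :=
        (lintegral_map (f := fun n : ℕ => ENNReal.ofReal ((n : ℝ) ^ p)) measurable_from_top hX).symm
    _ = ∑' n : ℕ, ENNReal.ofReal ((n : ℝ) ^ p) * μ.map X {n} := lintegral_countable' _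
    _ ≤ ∑' n : ℕ, ENNReal.ofReal ((n : ℝ) ^ p * μ.real {ω | n ≤ X ω}) := by
        refine ENNReal.tsum_le_tsum fun n => ?_
        rw [ENNReal.ofReal_mul (Real.rpow_nonneg (Nat.cast_nonneg _) _), ofReal_measureReal,
          Measure.map_apply hX (measurableSet_singleton n)]
        exact mul_le_mul_right (measure_mono fun ω (hω : X ω = n) => hω.ge) _
    _ = ENNReal.ofReal (∑' n : ℕ, (n : ℝ) ^ p * μ.real {ω | n ≤ X ω}) :=
        (ENNReal.ofReal_tsum_of_nonneg (fun n => by positivity) hsum).symm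
    _ < ⊤ := ENNReal.ofReal_lt_top

/-- The radius `⌊n / (C + 1)⌋` keeps the A4 bound `C R` below `n` while growing linearly in `n`. -/
lemma eventually_floor_div_bounds {C : ℝ} (hC : 0 ≤ C) :
    ∀ᶠ n : ℕ in atTop, 2 ≤ ⌊(n : ℝ) / (C + 1)⌋₊ ∧ ⌊C * ⌊(n : ℝ) / (C + 1)⌋₊⌋₊ < n ∧
      (2 * (C + 1))⁻¹ * n ≤ ((⌊(n : ℝ) / (C + 1)⌋₊ - 1 : ℕ) : ℝ) := by
  have ha : 0 < C + 1 := by linarith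
  filter_upwards [tendsto_natCast_atTop_atTop.eventually_ge_atTop (4 * (C + 1))] with n hn
  have hn0 : (0 : ℝ) < n := by linarith
  have hdiv : 4 ≤ (n : ℝ) / (C + 1) := by rwa [le_div_iff₀ ha]
  have hr2 : 2 ≤ ⌊(n : ℝ) / (C + 1)⌋₊ := Nat.le_floor (by norm_num; linarith)
  refine ⟨hr2, ?_, ?_⟩
  · rw [Nat.floor_lt (by positivity)]
    calc C * ⌊(n : ℝ) / (C + 1)⌋₊ ≤ C * ((n : ℝ) / (C + 1)) :=
          mul_le_mul_of_nonneg_left (Nat.floor_le (by positivity)) hC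
      _ < n := by rw [mul_div_assoc', div_lt_iff₀ ha]; nlinarith
  · rw [Nat.cast_sub (by omega), Nat.cast_one]
    have hfloor := Nat.sub_one_lt_floor ((n : ℝ) / (C + 1))
    have hhalf : (2 * (C + 1))⁻¹ * n = (n : ℝ) / (C + 1) / 2 := by field_simp
    linarith

namespace Perco

variable {d : ℕ}

def PathOfLength (T : Set (Pt d)) : ℕ → Pt d → Pt d → Prop
  | 0, x, y => x ∈ T ∧ x = y
  | m + 1, x, y => ∃ z, PathOfLength T m x z ∧ stepRel T z y

lemma pathOfLength_iff {T : Set (Pt d)} {m : ℕ} {x y : Pt d} :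
    PathOfLength T m x y ↔ ∃ p : ℕ → Pt d, p 0 = x ∧ p m = y ∧
      (∀ k, k ≤ m → p k ∈ T) ∧ ∀ k, k < m → adj (p k) (p (k + 1)) := by
  induction m generalizing y with
  | zero =>
    refine ⟨fun ⟨hx, hxy⟩ => ⟨fun _ => x, rfl, hxy, fun _ _ => hx, fun _ hk => by omega⟩,
      fun ⟨p, hp0, hpm, hpT, _⟩ => ⟨hp0 ▸ hpT 0 le_rfl, hp0 ▸ hpm⟩⟩
  | succ m ih =>
    constructor
    · rintro ⟨z, hz, hzy, -, hy⟩
      obtain ⟨p, hp0, hpm, hpT, hpadj⟩ := ih.1 hz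
      refine ⟨fun k => if k ≤ m then p k else y, by simp [hp0], by simp, fun k hk => ?_,
        fun k hk => ?_⟩
      · dsimp only
        split_ifs with h
        exacts [hpT k h, hy]
      · rcases Nat.lt_succ_iff_lt_or_eq.1 hk with hk | rfl
        · simpa [hk.le, Nat.succ_le_of_lt hk] using hpadj k hk
        · simpa [hpm] using hzy
    · rintro ⟨p, hp0, hpm, hpT, hpadj⟩
      exact ⟨p m, ih.2 ⟨p, hp0, rfl, fun k hk => hpT k (by omega), fun k hk => hpadj k (by omega)⟩,
        hpm ▸ ⟨hpadj m (by omega), hpT m (by omega), hpT (m + 1) le_rfl⟩⟩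

lemma connIn_iff_exists_pathOfLength {T : Set (Pt d)} {x y : Pt d} :
    connIn T x y ↔ ∃ m, PathOfLength T m x y := by
  constructor
  · rintro ⟨hx, -, h⟩
    induction h with
    | refl => exact ⟨0, hx, rfl⟩
    | tail _ hbc ih =>
      obtain ⟨m, hm⟩ := ih
      exact ⟨m + 1, _, hm, hbc⟩
  · rintro ⟨m, hm⟩
    induction m generalizing y with
    | zero => exact hm.2 ▸ ⟨hm.1, hm.1, .refl⟩
    | succ m ih =>
      obtain ⟨z, hz, hzy⟩ := hm
      obtain ⟨hx, -, h⟩ := ih hz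
      exact ⟨hx, hzy.2.2, h.tail hzy⟩

lemma chemDist_le_iff {T : Set (Pt d)} {x y : Pt d} {n : ℕ} :
    chemDist T x y ≤ n ↔ ∃ m ≤ n, PathOfLength T m x y := by
  have hset : {k : ℕ∞ | ∃ m : ℕ, k = m ∧ ∃ p : ℕ → Pt d, p 0 = x ∧ p m = y ∧
      (∀ k, k ≤ m → p k ∈ T) ∧ ∀ k, k < m → adj (p k) (p (k + 1))} =
      (fun m : ℕ => (m : ℕ∞)) '' {m | PathOfLength T m x y} := by
    ext k
    simp only [Set.mem_ofPred_eq, Set.mem_image, pathOfLength_iff]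
    exact exists_congr fun m => by rw [eq_comm, and_comm]
  rw [chemDist, hset]
  constructor
  · intro h
    rcases ((fun m : ℕ => (m : ℕ∞)) '' {m | PathOfLength T m x y}).eq_empty_or_nonempty with hS | hS
    · simp [hS] at h
    · obtain ⟨m, hm, hmin : (m : ℕ∞) = _⟩ := csInf_mem hS
      exact ⟨m, by rw [← hmin] at h; exact_mod_cast h, hm⟩
  · rintro ⟨m, hmn, hm⟩
    exact (sInf_le (Set.mem_image_of_mem (fun m : ℕ => (m : ℕ∞)) hm)).trans (Nat.cast_le.2 hmn)

lemma measurable_mem_SS (x : Pt d) : Measurable fun ω : Config d => x ∈ SS ω :=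
  (measurable_from_top (f := fun b : Bool => b = true)).comp (measurable_pi_apply x)

lemma measurable_pathOfLength (m : ℕ) (x y : Pt d) :
    Measurable fun ω : Config d => PathOfLength (SS ω) m x y := by
  induction m generalizing y with
  | zero => exact (measurable_mem_SS x).and measurable_const
  | succ m ih =>
    exact Measurable.exists fun z => (ih z).and <|
      measurable_const.and ((measurable_mem_SS z).and (measurable_mem_SS y))

lemma measurable_connIn (x y : Pt d) : Measurable fun ω : Config d => connIn (SS ω) x y := by
  simp only [connIn_iff_exists_pathOfLength]
  exact Measurable.exists fun m => measurable_pathOfLength m x y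

lemma measurable_chemDist_le (x y : Pt d) (n : ℕ) :
    Measurable fun ω : Config d => chemDist (SS ω) x y ≤ n := by
  simp only [chemDist_le_iff]
  exact Measurable.exists fun m => measurable_const.and (measurable_pathOfLength m x y)

lemma measurable_chemDist (x y : Pt d) : Measurable fun ω : Config d => chemDist (SS ω) x y :=
  ENat.measurable_of_measurable_le_natCast (measurable_chemDist_le x y)

lemma measurable_mem_Sinf (x : Pt d) : Measurable fun ω : Config d => x ∈ Sinf ω := by
  have h : ∀ ω : Config d,
      x ∈ Sinf ω ↔ x ∈ SS ω ∧ ∀ F : Finset (Pt d), ∃ z ∉ F, connIn (SS ω) x z := by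
    intro ω
    refine and_congr_right fun _ => ⟨fun hinf F => ?_, fun h hfin => ?_⟩
    · obtain ⟨z, hz, hzF⟩ := hinf.exists_notMem_finset F
      exact ⟨z, hzF, hz⟩
    · obtain ⟨z, hzF, hz⟩ := h hfin.toFinset
      exact hzF (hfin.mem_toFinset.2 hz)
  simp only [h]
  exact (measurable_mem_SS x).and <| Measurable.forall fun F => Measurable.exists fun z =>
    measurable_const.and (measurable_connIn x z)

lemma adj_add_left (z x y : Pt d) : adj (z + x) (z + y) ↔ adj x y := by
  simp only [adj, dist1, Pi.add_apply, add_sub_add_left_eq_sub]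

lemma connIn_preimage_add_left {T : Set (Pt d)} (z x y : Pt d) :
    connIn ((z + ·) ⁻¹' T) x y ↔ connIn T (z + x) (z + y) := by
  constructor
  · rintro ⟨hx, hy, h⟩
    exact ⟨hx, hy, h.lift (z + ·) fun a b hab => ⟨(adj_add_left z a b).2 hab.1, hab.2⟩⟩
  · rintro ⟨hx, hy, h⟩
    have h' := h.lift (p := stepRel ((z + ·) ⁻¹' T)) (-z + ·) fun a b hab =>
      ⟨(adj_add_left (-z) a b).2 hab.1, by simpa using hab.2.1, by simpa using hab.2.2⟩
    exact ⟨hx, hy, by simpa only [Function.onFun, neg_add_cancel_left] using h'⟩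

lemma mem_Sinf_shift (z x : Pt d) (ω : Config d) : x ∈ Sinf (shift z ω) ↔ z + x ∈ Sinf ω := by
  have hcl : cluster (SS (shift z ω)) x = (z + ·) ⁻¹' cluster (SS ω) (z + x) := by
    ext y
    exact connIn_preimage_add_left (T := SS ω) z x y
  refine and_congr_right fun _ => ?_
  rw [hcl]
  exact ⟨fun h hfin => h (hfin.preimage (add_right_injective z).injOn),
    fun h hfin => h (hfin.of_preimage (add_left_surjective z))⟩

/-- The event of axiom A3. -/
def rayHits (e : Pt d) (R : ℕ) : Set (Config d) :=
  {ω | ∃ k : ℕ, k ≤ R ∧ ((k : ℤ) • e) ∈ Sinf ω}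

/-- The event of axiom A4, with chemical-distance bound `M`. -/
def chemDistBounded (R M : ℕ) : Set (Config d) :=
  {ω | ∀ x ∈ Sinf ω ∩ ballZ (0 : Pt d) R, ∀ y ∈ Sinf ω ∩ ballZ (0 : Pt d) R,
    chemDist (SS ω) x y ≤ (M : ℕ∞)}

/-- `ρ_S(0, n_e e)`, with the junk value `0` when the distance is infinite. -/
noncomputable def distToRay (ω : Config d) (e : Pt d) : ℕ :=
  (chemDist (SS ω) (0 : Pt d) ((firstOnRay ω e : ℤ) • e)).toNat

lemma measurableSet_rayHits (e : Pt d) (R : ℕ) : MeasurableSet (rayHits e R) :=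
  (Measurable.exists fun _ => measurable_const.and (measurable_mem_Sinf _)).setOf

lemma measurableSet_chemDistBounded (R M : ℕ) : MeasurableSet (chemDistBounded (d := d) R M) :=
  (Measurable.forall fun x => ((measurable_mem_Sinf x).and measurable_const).imp <|
    Measurable.forall fun y => ((measurable_mem_Sinf y).and measurable_const).imp <|
      measurable_chemDist_le x y M).setOf

lemma measurable_firstOnRay (e : Pt d) : Measurable fun ω : Config d => firstOnRay ω e :=
  measurable_sInf_setOf fun _ => measurable_const.and (measurable_mem_Sinf _)

lemma measurable_distToRay (e : Pt d) : Measurable fun ω : Config d => distToRay ω e := by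
  have h : Measurable fun ωk : Config d × ℕ => chemDist (SS ωk.1) 0 ((ωk.2 : ℤ) • e) :=
    measurable_from_prod_countable_left fun k => measurable_chemDist 0 ((k : ℤ) • e)
  exact measurable_from_top.comp (h.comp (measurable_id.prodMk (measurable_firstOnRay e)))

lemma distInf_zero_smul_le {e : Pt d} (he : dist1 0 e = 1) (n : ℕ) :
    distInf 0 ((n : ℤ) • e) ≤ n := by
  refine Finset.sup_le fun i _ => ?_
  have hei : (e i).natAbs ≤ 1 := by
    rw [← he, dist1]
    simpa using Finset.single_le_sum (f := fun j => ((0 : Pt d) j - e j).natAbs)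
      (fun j _ => Nat.zero_le _) (Finset.mem_univ i)
  simpa [Int.natAbs_mul] using Nat.mul_le_mul_left n hei

lemma distToRay_le {e : Pt d} (he : dist1 0 e = 1) {ω : Config d} {R M : ℕ}
    (h0 : (0 : Pt d) ∈ Sinf ω) (hray : shift e ω ∈ rayHits e R)
    (hchem : ω ∈ chemDistBounded (R + 1) M) : distToRay ω e ≤ M := by
  obtain ⟨k, hkR, hk⟩ := hray
  rw [mem_Sinf_shift, ← one_add_zsmul] at hk
  have hk' : k + 1 ∈ {j : ℕ | 0 < j ∧ ((j : ℤ) • e) ∈ Sinf ω} :=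
    ⟨k.succ_pos, by rwa [Nat.cast_succ, add_comm]⟩
  have hn : firstOnRay ω e ≤ R + 1 := (Nat.sInf_le hk').trans (by omega)
  have hmem : ((firstOnRay ω e : ℤ) • e) ∈ Sinf ω := (Nat.sInf_mem ⟨_, hk'⟩).2
  refine ENat.toNat_le_of_le_natCast (hchem 0 ⟨h0, ?_⟩ _ ⟨hmem, ?_⟩)
  · simp [ballZ, distInf]
  · exact (distInf_zero_smul_le he _).trans hn

lemma measureReal_distToRay_gt_le (P : Measure (Config d)) [IsProbabilityMeasure P]
    {e : Pt d} (he : dist1 0 e = 1) (hmp : MeasurePreserving (shift e) P P) (R M : ℕ) :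
    P.real ({ω | (0 : Pt d) ∈ Sinf ω} ∩ {ω | M < distToRay ω e}) ≤
      (1 - P.real (rayHits e R)) + (1 - P.real (chemDistBounded (R + 1) M)) := by
  have hsub : {ω | (0 : Pt d) ∈ Sinf ω} ∩ {ω | M < distToRay ω e} ⊆
      (shift e ⁻¹' rayHits e R)ᶜ ∪ (chemDistBounded (R + 1) M)ᶜ := by
    rintro ω ⟨h0, hM⟩
    by_contra! h
    simp only [Set.mem_union, Set.mem_compl_iff, not_or, not_not] at h
    exact (distToRay_le he h0 h.1 h.2).not_gt hM
  calc _ ≤ P.real ((shift e ⁻¹' rayHits e R)ᶜ ∪ (chemDistBounded (R + 1) M)ᶜ) :=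
        measureReal_mono hsub
    _ ≤ P.real (shift e ⁻¹' rayHits e R)ᶜ + P.real (chemDistBounded (R + 1) M)ᶜ :=
        measureReal_union_le _ _
    _ = _ := by
      rw [probReal_compl_eq_one_sub (hmp.measurable (measurableSet_rayHits e R)),
        hmp.measureReal_preimage (measurableSet_rayHits e R).nullMeasurableSet,
        probReal_compl_eq_one_sub (measurableSet_chemDistBounded _ _)]

lemma isBigO_measureReal_le_distToRay (P : Measure (Config d)) [IsProbabilityMeasure P]
    {e : Pt d} (he : dist1 0 e = 1) (hmp : MeasurePreserving (shift e) P P)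
    {c₃ C₃ Δ₃ c₄ C₄ Δ₄ : ℝ} (hc₃ : 0 < c₃) (hΔ₃ : 0 < Δ₃) (hc₄ : 0 < c₄) (hC₄ : 0 ≤ C₄)
    (hΔ₄ : 0 < Δ₄)
    (h₃ : ∀ R : ℕ, 1 ≤ R →
      1 - C₃ * Real.exp (-c₃ * Real.log R ^ (1 + Δ₃)) ≤ P.real (rayHits e R))
    (h₄ : ∀ R : ℕ, 1 ≤ R →
      1 - C₄ * Real.exp (-c₄ * Real.log R ^ (1 + Δ₄)) ≤ P.real (chemDistBounded R ⌊C₄ * R⌋₊))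
    {q : ℝ} (hq : 0 ≤ q) :
    (fun n : ℕ => P.real ({ω | (0 : Pt d) ∈ Sinf ω} ∩ {ω | n ≤ distToRay ω e})) =O[atTop]
      fun n => (n : ℝ) ^ (-q) := by
  set r : ℕ → ℕ := fun n => ⌊(n : ℝ) / (C₄ + 1)⌋₊
  have hκ : 0 < (2 * (C₄ + 1))⁻¹ := by positivity
  have hbounds := eventually_floor_div_bounds hC₄
  have hbig₃ := isBigO_exp_neg_log_rpow hc₃ hΔ₃ hq hκ (hbounds.mono fun n h => h.2.2)
  have hbig₄ := isBigO_exp_neg_log_rpow hc₄ hΔ₄ hq hκ (u := fun n => (r n : ℝ))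
    (hbounds.mono fun n h => h.2.2.trans (Nat.cast_le.2 (Nat.sub_le _ _)))
  refine (IsBigO.of_bound' ?_).trans ((hbig₃.const_mul_left C₃).add (hbig₄.const_mul_left C₄))
  filter_upwards [hbounds] with n hn
  obtain ⟨hr2 : 2 ≤ r n, hM, -⟩ := hn
  have hR : r n - 1 + 1 = r n := by omega
  have htail := measureReal_distToRay_gt_le P he hmp (r n - 1) ⌊C₄ * r n⌋₊
  rw [hR] at htail
  have hsub : {ω | (0 : Pt d) ∈ Sinf ω} ∩ {ω | n ≤ distToRay ω e} ⊆
      {ω | (0 : Pt d) ∈ Sinf ω} ∩ {ω | ⌊C₄ * r n⌋₊ < distToRay ω e} :=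
    Set.inter_subset_inter_right _ fun ω hω => hM.trans_le hω
  rw [Real.norm_of_nonneg measureReal_nonneg]
  refine le_trans ?_ (le_abs_self _)
  linarith [measureReal_mono (μ := P) hsub, h₃ (r n - 1) (by omega), h₄ (r n) (by omega)]

theorem stmt18_general (d : ℕ) (P : Measure (Config d)) (hP : IsProbabilityMeasure P)
    -- A1
    (hA1 : ∀ e : Pt d, dist1 (0 : Pt d) e = 1 → Ergodic (shift e) P)
    -- A3
    (hA3 : ∃ c > (0:ℝ), ∃ C > (0:ℝ), ∃ Δ₃ > (0:ℝ), ∀ R : ℕ, 1 ≤ R →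
      ∀ e : Pt d, dist1 (0 : Pt d) e = 1 →
        1 - C * Real.exp (-c * (Real.log R) ^ (1 + Δ₃)) ≤
          (P {ω | ∃ k : ℕ, k ≤ R ∧ ((k : ℤ) • e) ∈ Sinf ω}).toReal)
    -- A4
    (hA4 : ∃ c > (0:ℝ), ∃ C > (0:ℝ), ∃ Δ₄ > (0:ℝ), ∀ R : ℕ, 1 ≤ R →
      1 - C * Real.exp (-c * (Real.log R) ^ (1 + Δ₄)) ≤
        (P {ω | ∀ x ∈ Sinf ω ∩ ballZ (0 : Pt d) R, ∀ y ∈ Sinf ω ∩ ballZ (0 : Pt d) R,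
            chemDist (SS ω) x y ≤ ((⌊C * (R : ℝ)⌋₊ : ℕ) : ℕ∞)}).toReal) :
    ∀ e : Pt d, dist1 (0 : Pt d) e = 1 → ∀ p : ℝ, 1 ≤ p →
      Integrable
        (fun ω =>
          (((chemDist (SS ω) (0 : Pt d) ((firstOnRay ω e : ℤ) • e)).toNat : ℝ)) ^ p)
        (ProbabilityTheory.cond P {ω | (0 : Pt d) ∈ Sinf ω}) := by
  intro e he p _
  obtain ⟨c₃, hc₃, C₃, -, Δ₃, hΔ₃, h₃⟩ := hA3
  obtain ⟨c₄, hc₄, C₄, hC₄, Δ₄, hΔ₄, h₄⟩ := hA4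
  have hA : MeasurableSet {ω : Config d | (0 : Pt d) ∈ Sinf ω} := (measurable_mem_Sinf 0).setOf
  have htail := isBigO_measureReal_le_distToRay P he (hA1 e he).toMeasurePreserving hc₃ hΔ₃ hc₄
    hC₄.le hΔ₄ (fun R hR => h₃ R hR e he) h₄ (q := p + 2) (by linarith)
  refine integrable_rpow_of_isBigO_tail (X := fun ω => distToRay ω e) (measurable_distToRay e)
    (q := p + 2) (by linarith) ?_
  simp only [measureReal_def, ProbabilityTheory.cond_apply hA, ENNReal.toReal_mul]
  exact htail.const_mul_left _

/-- Under A1–A4, for every coordinate direction `e` and every `p ≥ 1` the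
chemical distance `ρ_S(0, n_e·e)` has a finite `p`-th moment under `P₀ = P[·|0 ∈ S_∞]`. -/
theorem stmt18 (d : ℕ) (hd : 2 ≤ d) (P : Measure (Config d)) (hP : IsProbabilityMeasure P)
    -- A1
    (hA1 : ∀ e : Pt d, dist1 (0 : Pt d) e = 1 → Ergodic (shift e) P)
    -- A2
    (hA2 : ∀ᵐ ω ∂P, (Sinf ω).Nonempty ∧ ∀ x ∈ Sinf ω, ∀ y ∈ Sinf ω, connIn (SS ω) x y)
    -- A3
    (hA3 : ∃ c > (0:ℝ), ∃ C > (0:ℝ), ∃ Δ₃ > (0:ℝ), ∀ R : ℕ, 1 ≤ R →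
      ∀ e : Pt d, dist1 (0 : Pt d) e = 1 →
        1 - C * Real.exp (-c * (Real.log R) ^ (1 + Δ₃)) ≤
          (P {ω | ∃ k : ℕ, k ≤ R ∧ ((k : ℤ) • e) ∈ Sinf ω}).toReal)
    -- A4
    (hA4 : ∃ c > (0:ℝ), ∃ C > (0:ℝ), ∃ Δ₄ > (0:ℝ), ∀ R : ℕ, 1 ≤ R →
      1 - C * Real.exp (-c * (Real.log R) ^ (1 + Δ₄)) ≤
        (P {ω | ∀ x ∈ Sinf ω ∩ ballZ (0 : Pt d) R, ∀ y ∈ Sinf ω ∩ ballZ (0 : Pt d) R,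
            chemDist (SS ω) x y ≤ ((⌊C * (R : ℝ)⌋₊ : ℕ) : ℕ∞)}).toReal) :
    ∀ e : Pt d, dist1 (0 : Pt d) e = 1 → ∀ p : ℝ, 1 ≤ p →
      Integrable
        (fun ω =>
          (((chemDist (SS ω) (0 : Pt d) ((firstOnRay ω e : ℤ) • e)).toNat : ℝ)) ^ p)
        (ProbabilityTheory.cond P {ω | (0 : Pt d) ∈ Sinf ω}) :=
  stmt18_general d P hP hA1 hA3 hA4

end Perco
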